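/- Let Φ : ℚ[K₁, K₂, G, X] → ℚ[t₁, t₂, r] be the ℚ-algebra homomorphism determined by K₁ ↦ −(t₁ + t₂), K₂ ↦ −(t₁² + t₂²), G ↦ (t₁ − r)(t₂ + r), and X ↦ r(t₁ − t₂). Then the kernel of Φ is the principal ideal generated by the polynomial (2X + (2K₂ + K₁²))² − (2K₂ + K₁²)(4G − K₁²). -/

import Mathlib

/-!
Single out `X` and view `ℚ[K₁,K₂,G,X]` as `A[X]` with `A = ℚ[K₁,K₂,G]`. The relation has leading
coefficient `4` in `X`, so after division every class modulo it has a representative `a + b X`, and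
it suffices to show that `Φ(a) + Φ(b) r(t₁ - t₂) = 0` forces `a = b = 0`. First, `Φ` is injective on
`A`: after the substitution `t₁ ↦ t₁² + t₂, t₂ ↦ t₁² - t₂, r ↦ t₂ - r` the images of `K₁, K₂, G`
become `-2t₁², -2t₁⁴ - 2t₂², t₁⁴ - r²`, a triangular change of variables composed with squaring all
variables. Second, the reflection `r ↦ t₁ - t₂ - r` fixes `Φ(A)` but not `r(t₁ - t₂)`; subtracting
the reflected relation gives `Φ(b) = 0`.
-/

open MvPolynomial

namespace Polynomial

variable {R S : Type*}

theorem ker_eq_span_singleton_of_isUnit_leadingCoeff [CommRing R] [Nontrivial R] [Semiring S]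
    (φ : R[X] →+* S) {M : R[X]} (hM : IsUnit M.leadingCoeff) (hφM : φ M = 0)
    (hinj : ∀ p : R[X], p.degree < M.degree → φ p = 0 → p = 0) :
    RingHom.ker φ = Ideal.span {M} := by
  set M' := hM.unit⁻¹ • M
  have hM' : M' = C (↑hM.unit⁻¹ : R) * M := smul_eq_C_mul _
  have hmonic : M'.Monic := monic_of_isUnit_leadingCoeff_inv_smul hM
  have hdeg : M'.degree = M.degree := degree_smul_of_smul_regular _ (isSMulRegular_of_group _)
  rw [← Ideal.span_singleton_mul_left_unit (isUnit_C.mpr (Units.isUnit _)), ← hM']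
  ext f
  rw [RingHom.mem_ker, Ideal.mem_span_singleton, ← modByMonic_eq_zero_iff_dvd hmonic]
  have hφf : φ f = φ (f %ₘ M') := by
    conv_lhs => rw [← modByMonic_add_div f M']
    rw [map_add, map_mul, hM', map_mul, hφM, mul_zero, zero_mul, add_zero]
  rw [hφf]
  exact ⟨hinj _ (hdeg ▸ degree_modByMonic_lt f hmonic), fun h ↦ by rw [h, map_zero]⟩

theorem eq_zero_of_eval₂_eq_zero_of_degree_le_one [Semiring R] [CommRing S] [IsDomain S]
    {φ : R →+* S} (hφ : Function.Injective φ) (σ : S →+* S) (hσ : ∀ a, σ (φ a) = φ a)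
    {w : S} (hw : σ w ≠ w) {p : R[X]} (hp : p.degree ≤ 1) (h : p.eval₂ φ w = 0) : p = 0 := by
  rw [eq_X_add_C_of_degree_le_one hp] at h ⊢
  simp only [eval₂_add, eval₂_mul, eval₂_C, eval₂_X] at h
  have hσh : φ (p.coeff 1) * σ w + φ (p.coeff 0) = 0 := by
    simpa only [map_add, map_mul, hσ, map_zero] using congrArg σ h
  have h1 : φ (p.coeff 1) = 0 := by
    have : φ (p.coeff 1) * (w - σ w) = 0 := by linear_combination h - hσh
    exact (mul_eq_zero.mp this).resolve_right (sub_ne_zero.mpr hw.symm)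
  have h0 : φ (p.coeff 0) = 0 := by rwa [h1, zero_mul, zero_add] at h
  rw [(map_eq_zero_iff φ hφ).mp h1, (map_eq_zero_iff φ hφ).mp h0, map_zero, zero_mul, add_zero]

end Polynomial

namespace MvPolynomial

variable (R : Type*) [CommSemiring R] (n : ℕ)

noncomputable def finSuccEquivLast :
    MvPolynomial (Fin (n + 1)) R ≃ₐ[R] Polynomial (MvPolynomial (Fin n) R) :=
  (renameEquiv R (finRotate (n + 1))).trans (finSuccEquiv R n)

variable {R n}

theorem finSuccEquivLast_X_last : finSuccEquivLast R n (X (Fin.last n)) = Polynomial.X := by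
  simp [finSuccEquivLast, finSuccEquiv_X_zero]

theorem finSuccEquivLast_X_castSucc (i : Fin n) :
    finSuccEquivLast R n (X i.castSucc) = Polynomial.C (X i) := by
  simp [finSuccEquivLast, Fin.coeSucc_eq_succ, finSuccEquiv_X_succ]

end MvPolynomial

namespace PhiKernel

local notation "A" => MvPolynomial (Fin 3) ℚ

noncomputable def phiBase : A →ₐ[ℚ] A :=
  aeval ![-(X 0 + X 1), -(X 0 ^ 2 + X 1 ^ 2), (X 0 - X 2) * (X 1 + X 2)]

noncomputable def squareSubst : A →ₐ[ℚ] A :=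
  aeval ![X 0 ^ 2 + X 1, X 0 ^ 2 - X 1, X 1 - X 2]

noncomputable def triangular : A →ₐ[ℚ] A :=
  aeval ![-2 * X 0, -2 * X 0 ^ 2 - 2 * X 1, X 0 ^ 2 - X 2]

noncomputable def triangularInv : A →ₐ[ℚ] A :=
  aeval ![-(C 2⁻¹ * X 0), -(C 2⁻¹ * X 1) - C 4⁻¹ * X 0 ^ 2, C 4⁻¹ * X 0 ^ 2 - X 2]

theorem triangularInv_comp_triangular : triangularInv.comp triangular = AlgHom.id ℚ A := by
  have h2 : (2 : A) * C 2⁻¹ = 1 := by rw [← map_ofNat C, ← map_mul]; norm_num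
  have h4 : (C 2⁻¹ : A) ^ 2 = C 4⁻¹ := by rw [← map_pow]; norm_num
  apply algHom_ext
  intro i
  fin_cases i <;> simp [triangular, triangularInv, map_ofNat]
  · linear_combination (X 0 : A) * h2
  · linear_combination (X 1 : A) * h2 - 2 * X 0 ^ 2 * h4
  · linear_combination (X 0 ^ 2 : A) * h4

theorem squareSubst_comp_phiBase : squareSubst.comp phiBase = (expand 2).comp triangular := by
  apply algHom_ext
  intro i
  fin_cases i <;> simp [squareSubst, phiBase, triangular, map_ofNat] <;> ring

theorem phiBase_injective : Function.Injective phiBase := by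
  apply Function.Injective.of_comp (f := squareSubst)
  rw [← AlgHom.coe_comp, squareSubst_comp_phiBase, AlgHom.coe_comp]
  exact (expand_injective two_pos).comp
    (Function.LeftInverse.injective (g := triangularInv) fun f ↦ by
      rw [← AlgHom.comp_apply, triangularInv_comp_triangular, AlgHom.id_apply])

noncomputable def reflect : A →ₐ[ℚ] A := aeval ![X 0, X 1, X 0 - X 1 - X 2]

theorem reflect_phiBase (a : A) : reflect (phiBase a) = phiBase a := by
  rw [← AlgHom.comp_apply]
  congr 1
  apply algHom_ext
  intro i
  fin_cases i <;> simp [reflect, phiBase]; ring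

theorem reflect_ne_self : reflect (X 2 * (X 0 - X 1)) ≠ X 2 * (X 0 - X 1) := by
  intro h
  simpa [reflect] using congrArg (eval ![1, 0, 1]) h

noncomputable def phiPoly : Polynomial A →ₐ[ℚ] A :=
  Polynomial.eval₂AlgHom phiBase (X 2 * (X 0 - X 1)) fun _ ↦ Commute.all _ _

theorem aeval_eq_phiPoly_finSuccEquivLast (f : MvPolynomial (Fin 4) ℚ) :
    aeval ![-(X 0 + X 1 : A), -(X 0 ^ 2 + X 1 ^ 2), (X 0 - X 2) * (X 1 + X 2), X 2 * (X 0 - X 1)] f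
      = phiPoly (finSuccEquivLast ℚ 3 f) := by
  rw [← AlgEquiv.coe_toAlgHom, ← AlgHom.comp_apply]
  congr 1
  apply algHom_ext
  intro i
  induction i using Fin.lastCases with
  | last =>
    rw [AlgHom.comp_apply, AlgEquiv.coe_toAlgHom, finSuccEquivLast_X_last]
    simp [phiPoly]
  | cast i =>
    rw [AlgHom.comp_apply, AlgEquiv.coe_toAlgHom, finSuccEquivLast_X_castSucc]
    fin_cases i <;> simp [phiPoly, phiBase]

noncomputable def relPoly : Polynomial A :=
  Polynomial.C 4 * Polynomial.X ^ 2 + Polynomial.C (4 * (2 * X 1 + X 0 ^ 2)) * Polynomial.X +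
    Polynomial.C ((2 * X 1 + X 0 ^ 2) ^ 2 - (2 * X 1 + X 0 ^ 2) * (4 * X 2 - X 0 ^ 2))

theorem finSuccEquivLast_relation :
    finSuccEquivLast ℚ 3 ((2 * X 3 + (2 * X 1 + X 0 ^ 2)) ^ 2 -
      (2 * X 1 + X 0 ^ 2) * (4 * X 2 - X 0 ^ 2)) = relPoly := by
  rw [show (X 0 : MvPolynomial (Fin 4) ℚ) = X (Fin.castSucc 0) from rfl,
    show (X 1 : MvPolynomial (Fin 4) ℚ) = X (Fin.castSucc 1) from rfl,
    show (X 2 : MvPolynomial (Fin 4) ℚ) = X (Fin.castSucc 2) from rfl,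
    show (X 3 : MvPolynomial (Fin 4) ℚ) = X (Fin.last 3) from rfl]
  simp only [map_sub, map_add, map_mul, map_pow, map_ofNat, finSuccEquivLast_X_castSucc,
    finSuccEquivLast_X_last, relPoly]
  ring

theorem phiPoly_relPoly : phiPoly relPoly = 0 := by
  rw [← finSuccEquivLast_relation, ← aeval_eq_phiPoly_finSuccEquivLast]
  simp [map_ofNat]
  ring

theorem ker_phiPoly : RingHom.ker phiPoly.toRingHom = Ideal.span {relPoly} := by
  have h4 : (4 : A) ≠ 0 := by norm_num
  refine Polynomial.ker_eq_span_singleton_of_isUnit_leadingCoeff _ ?_ phiPoly_relPoly ?_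
  · rw [relPoly, Polynomial.leadingCoeff_quadratic h4, ← map_ofNat (algebraMap ℚ A)]
    exact (Ne.isUnit (by norm_num)).map _
  · intro p hp hφp
    rw [relPoly, Polynomial.degree_quadratic h4] at hp
    exact Polynomial.eq_zero_of_eval₂_eq_zero_of_degree_le_one phiBase_injective
      reflect.toRingHom reflect_phiBase reflect_ne_self (Order.le_of_lt_succ hp) hφp

end PhiKernel

theorem kernel_of_Phi
    (Φ : MvPolynomial (Fin 4) ℚ →ₐ[ℚ] MvPolynomial (Fin 3) ℚ)
    (hΦ : Φ = aeval ![-(X 0 + X 1 : MvPolynomial (Fin 3) ℚ),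
        -(X 0 ^ 2 + X 1 ^ 2), (X 0 - X 2) * (X 1 + X 2), X 2 * (X 0 - X 1)]) :
    RingHom.ker Φ.toRingHom = Ideal.span
      {(2 * X 3 + (2 * X 1 + X 0 ^ 2)) ^ 2 -
        (2 * X 1 + X 0 ^ 2) * (4 * X 2 - X 0 ^ 2)} := by
  subst hΦ
  ext f
  rw [RingHom.mem_ker, Ideal.mem_span_singleton, ← map_dvd_iff (finSuccEquivLast ℚ 3),
    PhiKernel.finSuccEquivLast_relation, ← Ideal.mem_span_singleton, ← PhiKernel.ker_phiPoly,
    RingHom.mem_ker]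
  exact iff_of_eq (congrArg (· = 0) (PhiKernel.aeval_eq_phiPoly_finSuccEquivLast f))
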